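/- Let n ≥ 1 and 0 ≤ p ≤ q. Define γ_j = ((−1)^j/j!)·(q−p+1)!/((q−p+1+j)!) for 0 ≤ j ≤ p, and the operator Proj = ∑_{j=0}^{p} γ_j·(E)^j·(E†)^j on P_{p,q}. Then for every 0 ≤ ℓ ≤ p and every symplectic homogeneous polynomial R ∈ R_{p−ℓ,q+ℓ}, one has Proj((E)^ℓ R) = δ_{ℓ0}·(E)^ℓ R; i.e., Proj projects P_{p,q} onto its symplectic component R_{p,q} in the Fischer decomposition P_{p,q} = ⊕_{ℓ=0}^{p} (E)^ℓ R_{p−ℓ,q+ℓ}. -/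

import Mathlib

/-!
`E† = Edag n`, `E = Eop n` and `H = (z̄-degree) − (z-degree)` satisfy the `sl₂` relations
`[E†, E] = H`, `[H, E†] = 2 E†`, `[H, E] = −2 E`, all consequences of the commutator
`[X_c ∂_d, X_a ∂_b] = δ_{ad} X_c ∂_b − δ_{bc} X_a ∂_d`. A symplectic `R` of bidegree
`(p − ℓ, q + ℓ)` is a primitive vector of `H`-weight `μ = q − p + 2ℓ`, and the usual `sl₂`
computation gives `E^j E†^j E^ℓ R = ∏_{i<j} (ℓ − i)(μ − ℓ + 1 + i) · E^ℓ R`. Hence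
`Proj (E^ℓ R) = c · E^ℓ R` with
`c = (q−p+1)!/(q−p+ℓ)! · ∑_{j≤ℓ} (−1)^j C(ℓ,j) (q−p+2+j)(q−p+3+j)⋯(q−p+ℓ+j)`,
which up to sign is the `ℓ`-th forward difference at `0` of a polynomial of degree `ℓ − 1`
in `j`, hence vanishes for `ℓ ≥ 1`.
-/

open MvPolynomial

noncomputable section

/-- The inclusion `Fin n → Fin (2n)`, `j ↦ j`. -/
def il (n : ℕ) (j : Fin n) : Fin (2 * n) := ⟨j.1, by have := j.2; omega⟩

/-- The inclusion `Fin n → Fin (2n)`, `j ↦ n + j`. -/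
def ir (n : ℕ) (j : Fin n) : Fin (2 * n) := ⟨n + j.1, by have := j.2; omega⟩

/-- Bihomogeneous of bidegree `(p,q)` on `ℂ^{2n}`
(variables `Sum.inl j = z_j`, `Sum.inr j = z̄_j`, `j : Fin 2n`). -/
def BiHom (n : ℕ) (P : MvPolynomial (Fin (2 * n) ⊕ Fin (2 * n)) ℂ) (p q : ℕ) : Prop :=
  ∀ α ∈ P.support,
    (∑ j : Fin (2 * n), α (Sum.inl j)) = p ∧ (∑ j : Fin (2 * n), α (Sum.inr j)) = q

/-- The twisted Euler operator `E = ∑_{j=1}^n (z_j ∂_{z̄_{n+j}} − z_{n+j} ∂_{z̄_j})`. -/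
def Eop (n : ℕ) (P : MvPolynomial (Fin (2 * n) ⊕ Fin (2 * n)) ℂ) :
    MvPolynomial (Fin (2 * n) ⊕ Fin (2 * n)) ℂ :=
  ∑ j : Fin n,
    (X (Sum.inl (il n j)) * pderiv (Sum.inr (ir n j)) P
      - X (Sum.inl (ir n j)) * pderiv (Sum.inr (il n j)) P)

/-- The twisted Euler operator `E† = −∑_{j=1}^n (z̄_j ∂_{z_{n+j}} − z̄_{n+j} ∂_{z_j})`. -/
def Edag (n : ℕ) (P : MvPolynomial (Fin (2 * n) ⊕ Fin (2 * n)) ℂ) :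
    MvPolynomial (Fin (2 * n) ⊕ Fin (2 * n)) ℂ :=
  -∑ j : Fin n,
    (X (Sum.inr (il n j)) * pderiv (Sum.inl (ir n j)) P
      - X (Sum.inr (ir n j)) * pderiv (Sum.inl (il n j)) P)

/-- The coefficients `γ_j = ((−1)^j/j!)·(q−p+1)!/((q−p+1+j)!)`. -/
def gammaCoeff (p q j : ℕ) : ℂ :=
  ((-1 : ℂ) ^ j / (j.factorial : ℂ)) *
    (((q - p + 1).factorial : ℂ) / (((q - p + 1 + j).factorial : ℂ)))

open Finset LieModule
open scoped Polynomial

attribute [local instance] LieRing.ofAssociativeRing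

namespace MvPolynomial

variable {R σ : Type*} [CommRing R]

lemma pderiv_pderiv_comm (i j : σ) (p : MvPolynomial σ R) :
    pderiv i (pderiv j p) = pderiv j (pderiv i p) := by
  classical
  ext m
  simp only [coeff_pderiv, add_right_comm m, Finsupp.add_apply, Finsupp.single_apply]
  by_cases h : j = i
  · subst h; rfl
  · simp only [if_neg h, if_neg (Ne.symm h), add_zero]
    ring

def xPderiv (a b : σ) : Module.End R (MvPolynomial σ R) :=
  LinearMap.mulLeft R (X a) ∘ₗ (pderiv b).toLinearMap

@[simp] lemma xPderiv_apply (a b : σ) (p : MvPolynomial σ R) :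
    xPderiv a b p = X a * pderiv b p := rfl

lemma lie_xPderiv_xPderiv [DecidableEq σ] (a b c d : σ) :
    ⁅xPderiv (R := R) c d, xPderiv (R := R) a b⁆ =
      (if a = d then xPderiv c b else 0) - (if c = b then xPderiv a d else 0) := by
  refine LinearMap.ext fun p => ?_
  simp only [Ring.lie_def, LinearMap.sub_apply, Module.End.mul_apply, xPderiv_apply,
    pderiv_mul, pderiv_X, Pi.single_apply]
  rw [pderiv_pderiv_comm b d]
  split_ifs <;> simp only [xPderiv_apply, LinearMap.zero_apply] <;> ring

variable [Fintype σ]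

def weightedEulerOp (w : σ → ℕ) : Module.End R (MvPolynomial σ R) :=
  ∑ i, w i • xPderiv i i

lemma lie_weightedEulerOp_xPderiv [DecidableEq σ] (w : σ → ℕ) (a b : σ) :
    ⁅weightedEulerOp (R := R) w, xPderiv (R := R) a b⁆ =
      w a • xPderiv a b - w b • xPderiv a b := by
  calc ⁅weightedEulerOp (R := R) w, xPderiv (R := R) a b⁆
      = ∑ i, w i • ⁅xPderiv (R := R) i i, xPderiv a b⁆ := by
        simp only [weightedEulerOp, Ring.lie_def, Finset.sum_mul, Finset.mul_sum, smul_mul_assoc,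
          mul_smul_comm, ← Finset.sum_sub_distrib, smul_sub]
    _ = w a • xPderiv a b - w b • xPderiv a b := by
        simp only [lie_xPderiv_xPderiv, smul_sub, smul_ite, smul_zero, sum_sub_distrib,
          sum_ite_eq, sum_ite_eq', mem_univ, if_true]

lemma IsWeightedHomogeneous.weightedEulerOp_apply {w : σ → ℕ} {φ : MvPolynomial σ R} {m : ℕ}
    (h : φ.IsWeightedHomogeneous w m) : weightedEulerOp w φ = m • φ := by
  simpa [weightedEulerOp] using h.sum_weight_X_mul_pderiv

end MvPolynomial

namespace IsSl2Triple.HasPrimitiveVectorWith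

variable {R L M : Type*} [CommRing R] [LieRing L] [LieAlgebra R L] [AddCommGroup M] [Module R M]
  [LieRingModule L M] [LieModule R L M] {h e f : L} {t : IsSl2Triple h e f} {m : M} {μ : R}

lemma lie_e_pow_toEnd_f (P : t.HasPrimitiveVectorWith m μ) (k : ℕ) :
    ⁅e, (toEnd R L M f ^ k) m⁆ = ((k : R) * (μ - k + 1)) • (toEnd R L M f ^ (k - 1)) m := by
  cases k with
  | zero => simp [P.lie_e]
  | succ k =>
    rw [P.lie_e_pow_succ_toEnd_f, Nat.add_sub_cancel]
    congr 1
    push_cast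
    ring

lemma pow_toEnd_e_pow_toEnd_f (P : t.HasPrimitiveVectorWith m μ) (ℓ j : ℕ) :
    (toEnd R L M e ^ j) ((toEnd R L M f ^ ℓ) m) =
      (∏ i ∈ range j, (((ℓ : R) - i) * (μ - ℓ + 1 + i))) • (toEnd R L M f ^ (ℓ - j)) m := by
  induction j with
  | zero => simp
  | succ j ih =>
    rw [pow_succ', Module.End.mul_apply, ih, map_smul, toEnd_apply_apply, P.lie_e_pow_toEnd_f,
      smul_smul, prod_range_succ, Nat.sub_sub]
    rcases le_or_gt j ℓ with hj | hj
    · rw [Nat.cast_sub hj]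
      congr 2
      ring
    · rw [prod_eq_zero (mem_range.2 hj) (by simp), zero_mul, zero_mul]

lemma pow_toEnd_f_pow_toEnd_e_pow_toEnd_f (P : t.HasPrimitiveVectorWith m μ) (ℓ j : ℕ) :
    (toEnd R L M f ^ j) ((toEnd R L M e ^ j) ((toEnd R L M f ^ ℓ) m)) =
      (∏ i ∈ range j, (((ℓ : R) - i) * (μ - ℓ + 1 + i))) • (toEnd R L M f ^ ℓ) m := by
  rw [P.pow_toEnd_e_pow_toEnd_f, map_smul, ← Module.End.mul_apply, ← pow_add]
  rcases le_or_gt j ℓ with hj | hj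
  · rw [Nat.add_sub_cancel' hj]
  · rw [prod_eq_zero (mem_range.2 hj) (by simp), zero_smul, zero_smul]

end IsSl2Triple.HasPrimitiveVectorWith

lemma Polynomial.sum_range_neg_one_pow_mul_choose_mul_eval_add_eq_zero {R : Type*} [CommRing R]
    {P : R[X]} {n : ℕ} (hP : P.natDegree < n) (x : R) :
    ∑ k ∈ range (n + 1), (-1) ^ k * n.choose k * P.eval (x + k) = 0 := by
  have h := congrFun (fwdDiff_iter_eq_zero_of_degree_lt hP) x
  rw [fwdDiff_iter_eq_sum_shift, Pi.zero_apply] at h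
  calc ∑ k ∈ range (n + 1), (-1) ^ k * n.choose k * P.eval (x + k)
      = (-1) ^ n * ∑ k ∈ range (n + 1),
          ((-1 : ℤ) ^ (n - k) * n.choose k) • P.eval (x + k • 1) := by
        rw [mul_sum]
        refine sum_congr rfl fun k hk => ?_
        have hsign : (-1 : R) ^ n * (-1) ^ (n - k) = (-1) ^ k := by
          rw [← pow_add, show n + (n - k) = k + 2 * (n - k) by
            have := mem_range.1 hk; omega, pow_add, pow_mul, neg_one_sq, one_pow, mul_one]
        rw [zsmul_eq_mul, nsmul_one, ← hsign]
        push_cast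
        ring
    _ = 0 := by rw [h, mul_zero]

lemma prod_range_natCast_sub_mul_natCast_add {R : Type*} [CommRing R] (ℓ N j : ℕ) :
    ∏ i ∈ range j, (((ℓ : R) - i) * ((N : R) + i)) = ℓ.descFactorial j * N.ascFactorial j := by
  rw [prod_mul_distrib, ← descPochhammer_eval_eq_prod_range, descPochhammer_eval_eq_descFactorial,
    Nat.ascFactorial_eq_prod_range]
  push_cast
  rfl

lemma gammaCoeff_mul_descFactorial_mul_ascFactorial (p q : ℕ) {ℓ : ℕ} (hℓ : 1 ≤ ℓ) (j : ℕ) :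
    gammaCoeff p q j * (ℓ.descFactorial j * (q - p + ℓ + 1).ascFactorial j) =
      ((q - p + 1).factorial / (q - p + ℓ).factorial : ℂ) *
        ((-1) ^ j * ℓ.choose j * (q - p + 2 + j).ascFactorial (ℓ - 1)) := by
  have hasc : ((q - p + j + 1).factorial * (q - p + 2 + j).ascFactorial (ℓ - 1) : ℂ) =
      (q - p + ℓ).factorial * (q - p + ℓ + 1).ascFactorial j := by
    have h := Nat.factorial_mul_ascFactorial (q - p + j + 1) (ℓ - 1)
    rw [show q - p + j + 1 + 1 = q - p + 2 + j by omega,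
      show q - p + j + 1 + (ℓ - 1) = q - p + ℓ + j by omega,
      ← Nat.factorial_mul_ascFactorial (q - p + ℓ) j] at h
    exact_mod_cast h
  have h1 : ((q - p + j + 1).factorial : ℂ) ≠ 0 := Nat.cast_ne_zero.2 (Nat.factorial_ne_zero _)
  have h2 : ((q - p + ℓ).factorial : ℂ) ≠ 0 := Nat.cast_ne_zero.2 (Nat.factorial_ne_zero _)
  have h3 : (j.factorial : ℂ) ≠ 0 := Nat.cast_ne_zero.2 (Nat.factorial_ne_zero _)
  rw [gammaCoeff, Nat.descFactorial_eq_factorial_mul_choose,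
    show q - p + 1 + j = q - p + j + 1 by omega]
  field_simp
  push_cast
  linear_combination (-((q - p + 1).factorial * j.factorial * ℓ.choose j : ℂ)) * hasc

lemma sum_gammaCoeff_mul_descFactorial_mul_ascFactorial {p q ℓ : ℕ} (hℓ : ℓ ≤ p) :
    ∑ j ∈ range (p + 1), gammaCoeff p q j *
        (ℓ.descFactorial j * (q - p + ℓ + 1).ascFactorial j : ℂ) = if ℓ = 0 then 1 else 0 := by
  rw [← sum_subset (range_subset_range.2 (by omega : ℓ + 1 ≤ p + 1)) fun j _ hj => by
    rw [Nat.descFactorial_eq_zero_iff_lt.2 (by simpa using hj), Nat.cast_zero, zero_mul, mul_zero]]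
  rcases Nat.eq_zero_or_pos ℓ with rfl | hℓ0
  · simp [gammaCoeff, Nat.factorial_ne_zero]
  · rw [if_neg hℓ0.ne',
      sum_congr rfl fun j _ => gammaCoeff_mul_descFactorial_mul_ascFactorial p q hℓ0 j, ← mul_sum]
    have h := Polynomial.sum_range_neg_one_pow_mul_choose_mul_eval_add_eq_zero
      (P := ascPochhammer ℂ (ℓ - 1)) (n := ℓ) (by simp; omega) ((q - p + 2 : ℕ) : ℂ)
    simp_rw [← Nat.cast_add, ← ascPochhammer_eval_cast, ascPochhammer_nat_eq_ascFactorial] at h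
    rw [h, mul_zero]

section Symplectic

variable {n : ℕ}

@[simp] lemma il_inj {j k : Fin n} : il n j = il n k ↔ j = k := by
  simp [il, Fin.ext_iff]

@[simp] lemma ir_inj {j k : Fin n} : ir n j = ir n k ↔ j = k := by
  simp [ir, Fin.ext_iff]

@[simp] lemma il_ne_ir (j k : Fin n) : il n j ≠ ir n k := by
  simp only [il, ir, ne_eq, Fin.ext_iff]; omega

@[simp] lemma ir_ne_il (j k : Fin n) : ir n j ≠ il n k := (il_ne_ir k j).symm

lemma sum_univ_eq_sum_il_add_sum_ir {M : Type*} [AddCommMonoid M] (f : Fin (2 * n) → M) :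
    ∑ c, f c = ∑ j, f (il n j) + ∑ j, f (ir n j) := by
  rw [← Fintype.sum_equiv (finSumFinEquiv.trans (finCongr (two_mul n).symm))
    (Sum.elim (f ∘ il n) (f ∘ ir n)) f (by rintro (j | j) <;> rfl), Fintype.sum_sum_type]
  rfl

abbrev BiVar (n : ℕ) := Fin (2 * n) ⊕ Fin (2 * n)

abbrev BiPoly (n : ℕ) := MvPolynomial (BiVar n) ℂ

def twistedEuler (n : ℕ) : Module.End ℂ (BiPoly n) :=
  ∑ j, (xPderiv (.inl (il n j)) (.inr (ir n j)) - xPderiv (.inl (ir n j)) (.inr (il n j)))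

def twistedEulerDag (n : ℕ) : Module.End ℂ (BiPoly n) :=
  -∑ j, (xPderiv (.inr (il n j)) (.inl (ir n j)) - xPderiv (.inr (ir n j)) (.inl (il n j)))

def bidegreeDiff (n : ℕ) : Module.End ℂ (BiPoly n) :=
  weightedEulerOp (Sum.elim 0 1) - weightedEulerOp (Sum.elim 1 0)

lemma coe_twistedEuler : ⇑(twistedEuler n) = Eop n := by
  ext1 P; simp [twistedEuler, Eop]

lemma coe_twistedEulerDag : ⇑(twistedEulerDag n) = Edag n := by
  ext1 P; simp [twistedEulerDag, Edag]

lemma BiHom.isWeightedHomogeneous_inl {P : BiPoly n} {a b : ℕ} (h : BiHom n P a b) :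
    P.IsWeightedHomogeneous (Sum.elim 1 0) a := fun d hd => by
  simpa [Finsupp.weight_apply, Finsupp.sum_fintype] using (h d (mem_support_iff.2 hd)).1

lemma BiHom.isWeightedHomogeneous_inr {P : BiPoly n} {a b : ℕ} (h : BiHom n P a b) :
    P.IsWeightedHomogeneous (Sum.elim 0 1) b := fun d hd => by
  simpa [Finsupp.weight_apply, Finsupp.sum_fintype] using (h d (mem_support_iff.2 hd)).2

lemma BiHom.bidegreeDiff_apply {P : BiPoly n} {a b : ℕ} (h : BiHom n P a b) :
    bidegreeDiff n P = ((b : ℂ) - a) • P := by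
  rw [bidegreeDiff, LinearMap.sub_apply,
    h.isWeightedHomogeneous_inr.weightedEulerOp_apply,
    h.isWeightedHomogeneous_inl.weightedEulerOp_apply, sub_smul,
    Nat.cast_smul_eq_nsmul, Nat.cast_smul_eq_nsmul]

lemma bidegreeDiff_ne_zero (hn : 1 ≤ n) : bidegreeDiff n ≠ 0 := by
  intro h
  have hX := BiHom.bidegreeDiff_apply (n := n) (P := X (Sum.inl ⟨0, by omega⟩)) (a := 1)
    (b := 0) (fun d hd => by simp_all [support_X, Finsupp.single_apply])
  simp [h, eq_comm (a := (0 : BiPoly n)), X_ne_zero] at hX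

lemma lie_bidegreeDiff_xPderiv_inl_inr (c d : Fin (2 * n)) :
    ⁅bidegreeDiff n, xPderiv (R := ℂ) (.inl c : BiVar n) (.inr d)⁆ =
      -(2 • xPderiv (.inl c) (.inr d)) := by
  simp only [bidegreeDiff, sub_lie, lie_weightedEulerOp_xPderiv, Sum.elim_inl, Sum.elim_inr,
    Pi.zero_apply, Pi.one_apply, zero_smul, one_smul]
  abel

lemma lie_bidegreeDiff_xPderiv_inr_inl (c d : Fin (2 * n)) :
    ⁅bidegreeDiff n, xPderiv (R := ℂ) (.inr c : BiVar n) (.inl d)⁆ =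
      2 • xPderiv (.inr c) (.inl d) := by
  simp only [bidegreeDiff, sub_lie, lie_weightedEulerOp_xPderiv, Sum.elim_inl, Sum.elim_inr,
    Pi.zero_apply, Pi.one_apply, zero_smul, one_smul]
  abel

lemma lie_bidegreeDiff_twistedEuler :
    ⁅bidegreeDiff n, twistedEuler n⁆ = -(2 • twistedEuler n) := by
  simp only [twistedEuler, lie_sum, lie_sub, lie_bidegreeDiff_xPderiv_inl_inr, smul_sum, smul_sub,
    ← sum_neg_distrib, neg_sub, neg_sub_neg]

lemma lie_bidegreeDiff_twistedEulerDag :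
    ⁅bidegreeDiff n, twistedEulerDag n⁆ = 2 • twistedEulerDag n := by
  simp only [twistedEulerDag, lie_neg, lie_sum, lie_sub, lie_bidegreeDiff_xPderiv_inr_inl,
    smul_sum, smul_sub, smul_neg]

lemma lie_twistedEulerDag_twistedEuler :
    ⁅twistedEulerDag n, twistedEuler n⁆ = bidegreeDiff n := by
  simp only [twistedEulerDag, twistedEuler, neg_lie, sum_lie_sum, lie_sub, sub_lie,
    lie_xPderiv_xPderiv, Sum.inl.injEq, Sum.inr.injEq, il_inj, ir_inj, il_ne_ir, ir_ne_il,
    if_false, sub_zero, sum_sub_distrib, sum_ite_eq, sum_ite_eq', mem_univ, if_true]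
  simp only [bidegreeDiff, weightedEulerOp, Fintype.sum_sum_type, Sum.elim_inl, Sum.elim_inr,
    Pi.zero_apply, Pi.one_apply, zero_smul, one_smul, sum_const_zero, zero_add, add_zero,
    sum_univ_eq_sum_il_add_sum_ir]
  abel

lemma isSl2Triple_bidegreeDiff (hn : 1 ≤ n) :
    IsSl2Triple (bidegreeDiff n) (twistedEulerDag n) (twistedEuler n) where
  h_ne_zero := bidegreeDiff_ne_zero hn
  lie_e_f := lie_twistedEulerDag_twistedEuler
  lie_h_e_nsmul := lie_bidegreeDiff_twistedEulerDag
  lie_h_f_nsmul := lie_bidegreeDiff_twistedEuler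

end Symplectic

theorem statement7 (n p q : ℕ) (hn : 1 ≤ n) (hpq : p ≤ q) (ℓ : ℕ) (hℓ : ℓ ≤ p)
    (R : MvPolynomial (Fin (2 * n) ⊕ Fin (2 * n)) ℂ)
    (hR : BiHom n R (p - ℓ) (q + ℓ)) (hRsymp : Edag n R = 0) :
    (∑ j ∈ Finset.range (p + 1),
        C (gammaCoeff p q j) * (Eop n)^[j] ((Edag n)^[j] ((Eop n)^[ℓ] R)))
      = if ℓ = 0 then (Eop n)^[ℓ] R else 0 := by
  simp only [← coe_twistedEuler, ← coe_twistedEulerDag, ← Module.End.coe_pow] at hRsymp ⊢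
  rcases eq_or_ne R 0 with rfl | hR0
  · simp
  have P : (isSl2Triple_bidegreeDiff hn).HasPrimitiveVectorWith R
      (((q + ℓ : ℕ) : ℂ) - ((p - ℓ : ℕ) : ℂ)) :=
    ⟨hR0, hR.bidegreeDiff_apply, hRsymp⟩
  have hμ : ((q + ℓ : ℕ) : ℂ) - ((p - ℓ : ℕ) : ℂ) - ℓ + 1 = ((q - p + ℓ + 1 : ℕ) : ℂ) := by
    push_cast [Nat.cast_sub hℓ, Nat.cast_sub hpq]
    ring
  have key := P.pow_toEnd_f_pow_toEnd_e_pow_toEnd_f ℓ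
  simp only [LieModule.toEnd_module_end, LieHom.id_apply, hμ,
    prod_range_natCast_sub_mul_natCast_add] at key
  simp_rw [key, C_mul', smul_smul, ← sum_smul, sum_gammaCoeff_mul_descFactorial_mul_ascFactorial hℓ]
  split_ifs <;> simp

end
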